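/- arXiv:2203.02111 — 4 statements merged into one kernel-verified Lean document; each statement's English description precedes it below -/
import Mathlib

section
/- Let W ∈ ℝ^{N×N}, A ∈ ℝ^{n×n}, H ∈ ℝ^{n×m}, C ∈ ℝ^{m×n}, h > 0, and set Φ = I_N ⊗ e^{Ah} + W ⊗ 𝓗(h) ∈ ℝ^{Nn×Nn}. Then the set of complex eigenvalues of Φ equals the union, over all complex eigenvalues λ of W, of the sets of complex eigenvalues of the complex matrix e^{Ah} + λ·𝓗(h); that is, θ ∈ ℂ is an eigenvalue of Φ if and only if there exists an eigenvalue λ of W such that θ is an eigenvalue of e^{Ah} + λ·𝓗(h). -/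
open Matrix
open scoped Kronecker

/-- Matrix exponential of a real square matrix. -/
noncomputable def matExp {k : Type*} [Fintype k] [DecidableEq k]
    (A : Matrix k k ℝ) : Matrix k k ℝ := NormedSpace.exp A

/-- Entrywise integral `∫₀ʰ e^{Aτ} dτ`. -/
noncomputable def intExp {k : Type*} [Fintype k] [DecidableEq k]
    (A : Matrix k k ℝ) (h : ℝ) : Matrix k k ℝ :=
  Matrix.of fun i j => ∫ τ in (0:ℝ)..h, matExp (τ • A) i j

/-- A real matrix regarded as a complex matrix entrywise. -/
def cmap {a b : Type*} (M : Matrix a b ℝ) : Matrix a b ℂ := M.map Complex.ofReal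

/-- `θ` is a (complex) eigenvalue of the complex matrix `M`. -/
def IsEig {k : Type*} [Fintype k] (M : Matrix k k ℂ) (θ : ℂ) : Prop :=
  ∃ v : k → ℂ, v ≠ 0 ∧ M.mulVec v = θ • v

/-- Controllability of the discrete-time linear system `x(k+1) = F x(k) + G u(k)`:
every target state can be reached from every initial state in finite time. -/
def Controllable {q r : Type*} [Fintype q] [Fintype r]
    (F : Matrix q q ℝ) (G : Matrix q r ℝ) : Prop :=
  ∀ x₀ xf : q → ℝ, ∃ (T : ℕ) (u : ℕ → r → ℝ) (x : ℕ → q → ℝ),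
    x 0 = x₀ ∧ (∀ k, x (k + 1) = F.mulVec (x k) + G.mulVec (u k)) ∧ x T = xf

/-!
Write `E = e^{Ah}` and `K = 𝓗(h)`. The operators `W ⊗ I` and `Φ = I ⊗ E + W ⊗ K` commute,
so over `ℂ` every eigenspace of `Φ` contains an eigenvector `x` of `W ⊗ I`, say with eigenvalue
`μ` (then `μ` is an eigenvalue of `W`). On such an `x` the operator `W ⊗ K = (I ⊗ K)(W ⊗ I)`
acts as `μ (I ⊗ K)`, so `Φ x = (I ⊗ (E + μ K)) x`, and `θ` is an eigenvalue of `E + μ K`.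
Conversely, if `W u = μ u` and `(E + μ K) y = θ y`, then `u ⊗ y` is an eigenvector of `Φ`
for `θ`.
-/

namespace Matrix

section Kronecker

variable {R : Type*} [CommSemiring R] {a b c d : Type*}

def vecKron (u : a → R) (y : b → R) : a × b → R := fun p => u p.1 * y p.2

@[simp]
lemma vecKron_apply (u : a → R) (y : b → R) (p : a × b) : vecKron u y p = u p.1 * y p.2 := rfl

lemma smul_vecKron (μ : R) (u : a → R) (y : b → R) : vecKron (μ • u) y = μ • vecKron u y := by
  ext p; simp [mul_assoc]

lemma vecKron_smul (μ : R) (u : a → R) (y : b → R) : vecKron u (μ • y) = μ • vecKron u y := by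
  ext p; simp [mul_left_comm]

lemma vecKron_ne_zero [NoZeroDivisors R] {u : a → R} {y : b → R} (hu : u ≠ 0) (hy : y ≠ 0) :
    vecKron u y ≠ 0 := by
  obtain ⟨i, hi⟩ := Function.ne_iff.mp hu
  obtain ⟨j, hj⟩ := Function.ne_iff.mp hy
  exact Function.ne_iff.mpr ⟨(i, j), mul_ne_zero hi hj⟩

lemma kronecker_mulVec_vecKron [Fintype b] [Fintype d] (P : Matrix a b R) (Q : Matrix c d R)
    (u : b → R) (y : d → R) :
    (P ⊗ₖ Q) *ᵥ vecKron u y = vecKron (P *ᵥ u) (Q *ᵥ y) := by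
  ext ⟨i, j⟩
  simp only [mulVec, dotProduct, Fintype.sum_prod_type, kroneckerMap_apply, vecKron_apply,
    Finset.sum_mul_sum]
  exact Finset.sum_congr rfl fun k _ => Finset.sum_congr rfl fun l _ => by ring

lemma kronecker_one_mulVec_apply [Fintype b] [Fintype d] [DecidableEq d] (P : Matrix a b R)
    (x : b × d → R) (i : a) (j : d) :
    ((P ⊗ₖ (1 : Matrix d d R)) *ᵥ x) (i, j) = (P *ᵥ fun k => x (k, j)) i := by
  simp [mulVec, dotProduct, Fintype.sum_prod_type, one_apply]

lemma one_kronecker_mulVec_apply [Fintype b] [Fintype d] [DecidableEq b] (Q : Matrix c d R)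
    (x : b × d → R) (i : b) (j : c) :
    (((1 : Matrix b b R) ⊗ₖ Q) *ᵥ x) (i, j) = (Q *ᵥ fun l => x (i, l)) j := by
  simp [mulVec, dotProduct, Fintype.sum_prod_type, one_apply]

variable [Fintype a] [Fintype b] [DecidableEq a] [DecidableEq b]

lemma commute_kronecker_one_one_kronecker_add_kronecker (W : Matrix a a R) (E K : Matrix b b R) :
    Commute (W ⊗ₖ (1 : Matrix b b R)) (1 ⊗ₖ E + W ⊗ₖ K) :=
  Commute.add_right (by simp [Commute, SemiconjBy, ← mul_kronecker_mul])
    (by simp [Commute, SemiconjBy, ← mul_kronecker_mul])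

lemma one_kronecker_add_kronecker_mulVec_of_mulVec_eq_smul {W : Matrix a a R}
    (E K : Matrix b b R) {μ : R} {x : a × b → R} (hx : (W ⊗ₖ (1 : Matrix b b R)) *ᵥ x = μ • x) :
    (1 ⊗ₖ E + W ⊗ₖ K) *ᵥ x = (1 ⊗ₖ (E + μ • K)) *ᵥ x := by
  have hWK : W ⊗ₖ K = (1 ⊗ₖ K) * (W ⊗ₖ 1) := by rw [← mul_kronecker_mul, one_mul, mul_one]
  rw [hWK, add_mulVec, ← mulVec_mulVec, hx, mulVec_smul, kronecker_add, kronecker_smul, add_mulVec,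
    smul_mulVec]

end Kronecker

end Matrix

lemma cmap_one_kronecker_add_kronecker {a b : Type*} [DecidableEq a] (W : Matrix a a ℝ)
    (E K : Matrix b b ℝ) :
    cmap (1 ⊗ₖ E + W ⊗ₖ K) = 1 ⊗ₖ cmap E + cmap W ⊗ₖ cmap K := by
  ext ⟨i, j⟩ ⟨k, l⟩
  by_cases hik : i = k <;> simp [cmap, one_apply, hik]

open Module.End in
lemma IsEig.exists_eigenvector_of_commute {a : Type*} [Fintype a] [DecidableEq a]
    {T M : Matrix a a ℂ} (hTM : Commute T M) {θ : ℂ} (hθ : IsEig T θ) :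
    ∃ v ≠ 0, T *ᵥ v = θ • v ∧ ∃ μ : ℂ, M *ᵥ v = μ • v := by
  obtain ⟨x, hx0, hx⟩ := hθ
  set Z := eigenspace (toLin' T) θ
  have hMZ : Set.MapsTo (toLin' M) Z Z :=
    mapsTo_genEigenspace_of_comm (hTM.map toLinAlgEquiv') θ 1
  have : Nontrivial Z :=
    ⟨⟨⟨x, mem_eigenspace_iff.mpr hx⟩, 0, fun h => hx0 (congrArg Subtype.val h)⟩⟩
  obtain ⟨μ, hμ⟩ := exists_eigenvalue ((toLin' M).restrict hMZ)
  obtain ⟨⟨v, hvZ⟩, hv⟩ := hμ.exists_hasEigenvector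
  refine ⟨v, fun h => hv.2 (Subtype.ext h), mem_eigenspace_iff.mp hvZ, μ, ?_⟩
  exact congrArg Subtype.val (mem_eigenspace_iff.mp hv.1)

lemma IsEig.of_kronecker_one {a b : Type*} [Fintype a] [Fintype b] [DecidableEq b]
    {W : Matrix a a ℂ} {μ : ℂ} (hμ : IsEig (W ⊗ₖ (1 : Matrix b b ℂ)) μ) : IsEig W μ := by
  obtain ⟨x, hx0, hx⟩ := hμ
  obtain ⟨⟨i, j⟩, hij⟩ := Function.ne_iff.mp hx0
  refine ⟨fun k => x (k, j), Function.ne_iff.mpr ⟨i, hij⟩, funext fun k => ?_⟩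
  simpa [kronecker_one_mulVec_apply] using congrFun hx (k, j)

lemma IsEig.of_one_kronecker {a b : Type*} [Fintype a] [Fintype b] [DecidableEq a]
    {B : Matrix b b ℂ} {θ : ℂ} (hθ : IsEig ((1 : Matrix a a ℂ) ⊗ₖ B) θ) : IsEig B θ := by
  obtain ⟨x, hx0, hx⟩ := hθ
  obtain ⟨⟨i, j⟩, hij⟩ := Function.ne_iff.mp hx0
  refine ⟨fun l => x (i, l), Function.ne_iff.mpr ⟨j, hij⟩, funext fun l => ?_⟩
  simpa [one_kronecker_mulVec_apply] using congrFun hx (i, l)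

theorem isEig_one_kronecker_add_kronecker_iff {a b : Type*} [Fintype a] [Fintype b]
    [DecidableEq a] [DecidableEq b] (W : Matrix a a ℂ) (E K : Matrix b b ℂ) (θ : ℂ) :
    IsEig (1 ⊗ₖ E + W ⊗ₖ K) θ ↔ ∃ μ : ℂ, IsEig W μ ∧ IsEig (E + μ • K) θ := by
  constructor
  · intro hθ
    obtain ⟨x, hx0, hΦx, μ, hWx⟩ := hθ.exists_eigenvector_of_commute
      (commute_kronecker_one_one_kronecker_add_kronecker W E K).symm
    refine ⟨μ, IsEig.of_kronecker_one ⟨x, hx0, hWx⟩, IsEig.of_one_kronecker (a := a) ⟨x, hx0, ?_⟩⟩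
    rw [← one_kronecker_add_kronecker_mulVec_of_mulVec_eq_smul E K hWx, hΦx]
  · rintro ⟨μ, ⟨u, hu0, hu⟩, ⟨y, hy0, hy⟩⟩
    have hWx : (W ⊗ₖ (1 : Matrix b b ℂ)) *ᵥ vecKron u y = μ • vecKron u y := by
      rw [kronecker_mulVec_vecKron, hu, one_mulVec, smul_vecKron]
    refine ⟨vecKron u y, vecKron_ne_zero hu0 hy0, ?_⟩
    rw [one_kronecker_add_kronecker_mulVec_of_mulVec_eq_smul E K hWx, kronecker_mulVec_vecKron,
      one_mulVec, hy, vecKron_smul]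

theorem eigenvalues_of_singleLayer_sampled_general
    (N n m : ℕ) (W : Matrix (Fin N) (Fin N) ℝ)
    (A : Matrix (Fin n) (Fin n) ℝ) (H : Matrix (Fin n) (Fin m) ℝ)
    (C : Matrix (Fin m) (Fin n) ℝ) (h : ℝ)
    (Φ : Matrix (Fin N × Fin n) (Fin N × Fin n) ℝ)
    (hΦ : Φ = (1 : Matrix (Fin N) (Fin N) ℝ) ⊗ₖ matExp (h • A)
        + W ⊗ₖ (intExp A h * H * C))
    (θ : ℂ) :
    IsEig (cmap Φ) θ ↔
      ∃ μ : ℂ, IsEig (cmap W) μ ∧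
        IsEig (cmap (matExp (h • A)) + μ • cmap (intExp A h * H * C)) θ := by
  rw [hΦ, cmap_one_kronecker_add_kronecker]
  exact isEig_one_kronecker_add_kronecker_iff _ _ _ θ

/-- the spectrum of `Φ = I_N ⊗ e^{Ah} + W ⊗ 𝓗(h)` is the union over the
eigenvalues `λ` of `W` of the spectra of `e^{Ah} + λ·𝓗(h)`. -/
theorem eigenvalues_of_singleLayer_sampled
    (N n m : ℕ) (W : Matrix (Fin N) (Fin N) ℝ)
    (A : Matrix (Fin n) (Fin n) ℝ) (H : Matrix (Fin n) (Fin m) ℝ)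
    (C : Matrix (Fin m) (Fin n) ℝ) (h : ℝ) (hh : 0 < h)
    (Φ : Matrix (Fin N × Fin n) (Fin N × Fin n) ℝ)
    (hΦ : Φ = (1 : Matrix (Fin N) (Fin N) ℝ) ⊗ₖ matExp (h • A)
        + W ⊗ₖ (intExp A h * H * C))
    (θ : ℂ) :
    IsEig (cmap Φ) θ ↔
      ∃ μ : ℂ, IsEig (cmap W) μ ∧
        IsEig (cmap (matExp (h • A)) + μ • cmap (intExp A h * H * C)) θ :=
  eigenvalues_of_singleLayer_sampled_general N n m W A H C h Φ hΦ θ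
end

section
/- Consider the two-layer drive-response networked sampled-data system with state matrix Φ_s = [[Φ^{1,1}, 0], [Φ^{2,1}, Φ^{2,2}]] and input matrix Ψ_s = diag(Ψ^{1,1}, Ψ^{2,2}). Suppose: (1) for every θ ∈ ℂ and every nonzero row vector η ∈ ℂ^{1×Nn} with η Φ^{1,1} = θ η, one has η Ψ^{1,1} ≠ 0; and (2) for every θ ∈ ℂ, every nonzero η ∈ ℂ^{1×Nn} with η Φ^{2,2} = θ η, and every ξ ∈ ℂ^{1×Nn} with ξ(θ I_{Nn} − Φ^{1,1}) = η Φ^{2,1}, the concatenated row vector [ξ Ψ^{1,1}, η Ψ^{2,2}] is nonzero. Then the discrete-time system x(k+1) = Φ_s x(k) + Ψ_s u(k) is controllable. -/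
open Matrix
open scoped Kronecker

/-!
The proof is the Popov–Belevitch–Hautus test. If the states reachable from `0` do not fill the
whole space, some nonzero real row vector `η` annihilates every `Φ_s ^ j * Ψ_s`. The complex row
vectors with this property form a nonzero subspace that is invariant under right multiplication
by `Φ_s`, so it contains a left eigenvector of `Φ_s` annihilating `Ψ_s`; this contradicts the
Hautus condition. Since `Φ_s` is block lower triangular, a left eigenvector `(ξ, η)` of `Φ_s` with
eigenvalue `θ` either has `η = 0`, and then `ξ` is a left eigenvector of `Φ^{1,1}` (condition (1)),
or `η` is a left eigenvector of `Φ^{2,2}` and `ξ (θ I - Φ^{1,1}) = η Φ^{2,1}` (condition (2)).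
-/

namespace Matrix

section Reachability

variable {K q r : Type*} [CommRing K] [Fintype q] [Fintype r]
variable (F : Matrix q q K) (G : Matrix q r K)

def trajectory (x₀ : q → K) (u : ℕ → r → K) : ℕ → q → K
  | 0 => x₀
  | k + 1 => F *ᵥ trajectory x₀ u k + G *ᵥ u k

variable [DecidableEq q]

def controlMap (T : ℕ) : (ℕ → r → K) →ₗ[K] q → K :=
  ∑ i ∈ Finset.range T, (F ^ (T - 1 - i) * G).mulVecLin ∘ₗ LinearMap.proj i

theorem controlMap_apply (T : ℕ) (u : ℕ → r → K) :
    controlMap F G T u = ∑ i ∈ Finset.range T, (F ^ (T - 1 - i) * G) *ᵥ u i := by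
  simp [controlMap, LinearMap.sum_apply]

theorem trajectory_eq (x₀ : q → K) (u : ℕ → r → K) (T : ℕ) :
    trajectory F G x₀ u T = F ^ T *ᵥ x₀ + controlMap F G T u := by
  induction T with
  | zero => simp [trajectory, controlMap_apply]
  | succ T ih =>
    have hshift : ∀ i ∈ Finset.range T,
        F *ᵥ ((F ^ (T - 1 - i) * G) *ᵥ u i) = (F ^ (T + 1 - 1 - i) * G) *ᵥ u i := by
      intro i hi
      rw [mulVec_mulVec, ← Matrix.mul_assoc, ← pow_succ']
      congr 3
      have := Finset.mem_range.mp hi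
      omega
    rw [trajectory, ih, controlMap_apply, controlMap_apply, mulVec_add, mulVec_mulVec, ← pow_succ',
      mulVec_sum, Finset.sum_congr rfl hshift, Finset.sum_range_succ, Nat.add_sub_cancel,
      Nat.sub_self, pow_zero, Matrix.one_mul, add_assoc]

def reachableSubspace : Submodule K (q → K) :=
  ⨆ j : ℕ, LinearMap.range (F ^ j * G).mulVecLin

theorem range_mulVecLin_le_range_controlMap {j T : ℕ} (hj : j < T) :
    LinearMap.range (F ^ j * G).mulVecLin ≤ LinearMap.range (controlMap F G T) := by
  rintro _ ⟨w, rfl⟩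
  refine ⟨Pi.single (T - 1 - j) w, ?_⟩
  rw [controlMap_apply, Finset.sum_eq_single (T - 1 - j)]
  · rw [Pi.single_eq_same, show T - 1 - (T - 1 - j) = j by omega]
    rfl
  · intro i _ hi
    rw [Pi.single_eq_of_ne hi, mulVec_zero]
  · intro h
    exact absurd (Finset.mem_range.mpr (by omega)) h

theorem exists_range_controlMap_eq_top [IsNoetherianRing K] (h : reachableSubspace F G = ⊤) :
    ∃ T, LinearMap.range (controlMap F G T) = ⊤ := by
  set f : ℕ → Submodule K (q → K) := fun j => LinearMap.range (F ^ j * G).mulVecLin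
  obtain ⟨n, hn⟩ := monotone_stabilizes_iff_noetherian.mpr inferInstance (partialSups f)
  refine ⟨n + 1, eq_top_iff.mpr ?_⟩
  calc ⊤ = ⨆ m, partialSups f m := by rw [iSup_partialSups_eq]; exact h.symm
    _ ≤ partialSups f n := iSup_le fun m =>
        ((partialSups f).monotone (le_max_right n m)).trans (hn _ (le_max_left n m)).ge
    _ ≤ LinearMap.range (controlMap F G (n + 1)) :=
        partialSups_le _ _ _ fun j hj => range_mulVecLin_le_range_controlMap F G (by omega)

end Reachability

section Hautus

variable {K q r : Type*} [Field K] [Fintype q]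

def HautusCondition (F : Matrix q q K) (G : Matrix q r K) : Prop :=
  ∀ (θ : K) (η : q → K), η ≠ 0 → η ᵥ* F = θ • η → η ᵥ* G ≠ 0

variable [DecidableEq q]

theorem exists_ne_zero_vecMul_pow_mul_eq_zero [Fintype r] {F : Matrix q q K} {G : Matrix q r K}
    (h : reachableSubspace F G ≠ ⊤) : ∃ η : q → K, η ≠ 0 ∧ ∀ j : ℕ, η ᵥ* (F ^ j * G) = 0 := by
  obtain ⟨φ, hφ, hφW⟩ := Submodule.exists_dual_map_eq_bot_of_lt_top h.lt_top inferInstance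
  refine ⟨(dotProductEquiv K q).symm φ, by simpa using hφ, fun j => dotProduct_eq_zero _ fun w => ?_⟩
  have hmem : (F ^ j * G) *ᵥ w ∈ reachableSubspace F G := Submodule.mem_iSup_of_mem j ⟨w, rfl⟩
  rw [← dotProduct_mulVec, ← dotProductEquiv_apply_apply, LinearEquiv.apply_symm_apply,
    ← Submodule.mem_bot K, ← hφW]
  exact Submodule.mem_map_of_mem hmem

theorem HautusCondition.eq_zero_of_vecMul_pow_mul_eq_zero [IsAlgClosed K] {F : Matrix q q K}
    {G : Matrix q r K} (hF : HautusCondition F G) {η : q → K}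
    (hη : ∀ j : ℕ, η ᵥ* (F ^ j * G) = 0) : η = 0 := by
  set V : Submodule K (q → K) := ⨅ j : ℕ, LinearMap.ker (F ^ j * G).vecMulLinear
  have hV : ∀ x, x ∈ V ↔ ∀ j : ℕ, x ᵥ* (F ^ j * G) = 0 := by
    simp [V, Submodule.mem_iInf]
  have hVF : ∀ x ∈ V, F.vecMulLinear x ∈ V := by
    intro x hx
    rw [hV] at hx ⊢
    intro j
    rw [vecMulLinear_apply, vecMul_vecMul, ← Matrix.mul_assoc, ← pow_succ']
    exact hx (j + 1)
  by_contra hne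
  have : Nontrivial V := ⟨⟨⟨η, (hV η).mpr hη⟩, 0, fun h => hne congr($h.1)⟩⟩
  obtain ⟨θ, hθ⟩ := Module.End.exists_eigenvalue (F.vecMulLinear.restrict hVF)
  obtain ⟨v, hv, hv0⟩ := hθ.exists_hasEigenvector
  refine hF θ v (fun h => hv0 (Subtype.ext h)) ?_ ?_
  · exact congr($(Module.End.mem_eigenspace_iff.mp hv).1)
  · simpa using (hV v).mp v.2 0

theorem HautusCondition.fromBlocks_zero {n₂ m₂ : Type*} [Fintype n₂] {A : Matrix q q K}
    {C : Matrix n₂ q K} {D : Matrix n₂ n₂ K} {B₁ : Matrix q r K} {B₂ : Matrix n₂ m₂ K}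
    (hA : HautusCondition A B₁)
    (hD : ∀ (θ : K) (η : n₂ → K) (ξ : q → K), η ≠ 0 → η ᵥ* D = θ • η →
      ξ ᵥ* (θ • (1 : Matrix q q K) - A) = η ᵥ* C → Sum.elim (ξ ᵥ* B₁) (η ᵥ* B₂) ≠ 0) :
    HautusCondition (fromBlocks A 0 C D) (fromBlocks B₁ 0 0 B₂) := by
  rintro θ η hη hEig
  obtain ⟨ξ, ζ, rfl⟩ : ∃ ξ ζ, η = Sum.elim ξ ζ := ⟨_, _, (Sum.elim_comp_inl_inr η).symm⟩
  simp only [vecMul_fromBlocks, Sum.elim_comp_inl, Sum.elim_comp_inr, vecMul_zero, add_zero,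
    zero_add] at hEig ⊢
  have hξ : ξ ᵥ* A + ζ ᵥ* C = θ • ξ := funext fun i => congrFun hEig (Sum.inl i)
  have hζ : ζ ᵥ* D = θ • ζ := funext fun i => congrFun hEig (Sum.inr i)
  by_cases hζ0 : ζ = 0
  · subst hζ0
    have hξ0 : ξ ≠ 0 := by rintro rfl; exact hη Sum.elim_zero_zero
    rw [zero_vecMul, add_zero] at hξ
    exact fun h => hA θ ξ hξ0 hξ (funext fun i => congrFun h (Sum.inl i))
  · refine hD θ ζ ξ hζ0 hζ ?_
    rw [vecMul_sub, vecMul_smul, vecMul_one, ← hξ, add_sub_cancel_left]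

end Hautus

end Matrix

section RealSystems

theorem cmap_eq_map_ofRealHom {a b : Type*} (M : Matrix a b ℝ) :
    cmap M = M.map Complex.ofRealHom :=
  rfl

theorem cmap_fromBlocks {l m n o : Type*} (A : Matrix n l ℝ) (B : Matrix n m ℝ)
    (C : Matrix o l ℝ) (D : Matrix o m ℝ) :
    cmap (fromBlocks A B C D) = fromBlocks (cmap A) (cmap B) (cmap C) (cmap D) :=
  fromBlocks_map _ _ _ _ _

theorem cmap_zero {a b : Type*} : cmap (0 : Matrix a b ℝ) = 0 :=
  Matrix.map_zero _ Complex.ofReal_zero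

variable {q r : Type*} [Fintype q] [DecidableEq q]

theorem cmap_pow_mul (F : Matrix q q ℝ) (G : Matrix q r ℝ) (j : ℕ) :
    cmap (F ^ j * G) = cmap F ^ j * cmap G := by
  simp only [cmap_eq_map_ofRealHom, Matrix.map_mul, ← RingHom.mapMatrix_apply, map_pow]

variable [Fintype r]

theorem reachableSubspace_eq_top_of_hautusCondition_cmap {F : Matrix q q ℝ} {G : Matrix q r ℝ}
    (hF : Matrix.HautusCondition (cmap F) (cmap G)) : Matrix.reachableSubspace F G = ⊤ := by
  by_contra hne
  obtain ⟨η, hη, hηFG⟩ := Matrix.exists_ne_zero_vecMul_pow_mul_eq_zero hne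
  refine hη (funext fun i => Complex.ofReal_injective ?_)
  refine congrFun (hF.eq_zero_of_vecMul_pow_mul_eq_zero (η := Complex.ofRealHom ∘ η) fun j => ?_) i
  ext c
  rw [← cmap_pow_mul, cmap_eq_map_ofRealHom, ← RingHom.map_vecMul, hηFG j]
  simp

theorem controllable_of_range_controlMap_eq_top {F : Matrix q q ℝ} {G : Matrix q r ℝ} {T : ℕ}
    (hT : LinearMap.range (Matrix.controlMap F G T) = ⊤) : Controllable F G := by
  intro x₀ xf
  obtain ⟨u, hu⟩ := LinearMap.range_eq_top.mp hT (xf - F ^ T *ᵥ x₀)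
  refine ⟨T, u, Matrix.trajectory F G x₀ u, rfl, fun k => rfl, ?_⟩
  rw [Matrix.trajectory_eq, hu, add_sub_cancel]

theorem controllable_of_hautusCondition_cmap {F : Matrix q q ℝ} {G : Matrix q r ℝ}
    (hF : Matrix.HautusCondition (cmap F) (cmap G)) : Controllable F G :=
  have ⟨_, hT⟩ := Matrix.exists_range_controlMap_eq_top F G
    (reachableSubspace_eq_top_of_hautusCondition_cmap hF)
  controllable_of_range_controlMap_eq_top hT

end RealSystems

theorem twoLayer_driveResponse_controllable_general
    (N n p : ℕ)
    (Φ11 Φ22 Φ21 : Matrix (Fin N × Fin n) (Fin N × Fin n) ℝ)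
    (Ψ11 Ψ22 : Matrix (Fin N × Fin n) (Fin N × Fin p) ℝ)
    -- condition (1): drive layer
    (cond1 : ∀ (θ : ℂ) (η : Fin N × Fin n → ℂ), η ≠ 0 →
      η ᵥ* cmap Φ11 = θ • η → η ᵥ* cmap Ψ11 ≠ 0)
    -- condition (2): response layer together with inter-layer couplings
    (cond2 : ∀ (θ : ℂ) (η ξ : Fin N × Fin n → ℂ), η ≠ 0 →
      η ᵥ* cmap Φ22 = θ • η →
      ξ ᵥ* (θ • (1 : Matrix (Fin N × Fin n) (Fin N × Fin n) ℂ) - cmap Φ11)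
        = η ᵥ* cmap Φ21 →
      Sum.elim (ξ ᵥ* cmap Ψ11) (η ᵥ* cmap Ψ22) ≠ 0) :
    Controllable (Matrix.fromBlocks Φ11 0 Φ21 Φ22) (Matrix.fromBlocks Ψ11 0 0 Ψ22) := by
  apply controllable_of_hautusCondition_cmap
  rw [cmap_fromBlocks, cmap_fromBlocks, cmap_zero, cmap_zero]
  exact Matrix.HautusCondition.fromBlocks_zero cond1 cond2

/-- sufficient controllability condition for the two-layer drive-response
networked sampled-data system. -/
theorem twoLayer_driveResponse_controllable
    (N n m p : ℕ)
    (A1 A2 : Matrix (Fin n) (Fin n) ℝ) (B1 B2 : Matrix (Fin n) (Fin p) ℝ)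
    (C1 C2 : Matrix (Fin m) (Fin n) ℝ) (H1 H2 : Matrix (Fin n) (Fin m) ℝ)
    (W1 W2 : Matrix (Fin N) (Fin N) ℝ) (Δ1 Δ2 : Matrix (Fin N) (Fin N) ℝ)
    (hΔ1d : Δ1.IsDiag) (hΔ2d : Δ2.IsDiag)
    (hΔ1v : ∀ i, Δ1 i i = 0 ∨ Δ1 i i = 1) (hΔ2v : ∀ i, Δ2 i i = 0 ∨ Δ2 i i = 1)
    (D21 : Matrix (Fin N) (Fin N) ℝ) (P21 : Matrix (Fin n) (Fin m) ℝ)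
    (h : ℝ) (hh : 0 < h)
    (Φ11 Φ22 Φ21 : Matrix (Fin N × Fin n) (Fin N × Fin n) ℝ)
    (Ψ11 Ψ22 : Matrix (Fin N × Fin n) (Fin N × Fin p) ℝ)
    (hΦ11 : Φ11 = (1 : Matrix (Fin N) (Fin N) ℝ) ⊗ₖ matExp (h • A1)
        + W1 ⊗ₖ (intExp A1 h * H1 * C1))
    (hΦ22 : Φ22 = (1 : Matrix (Fin N) (Fin N) ℝ) ⊗ₖ matExp (h • A2)
        + W2 ⊗ₖ (intExp A2 h * H2 * C2))
    (hΦ21 : Φ21 = D21 ⊗ₖ (intExp A2 h * P21 * C1))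
    (hΨ11 : Ψ11 = Δ1 ⊗ₖ (intExp A1 h * B1))
    (hΨ22 : Ψ22 = Δ2 ⊗ₖ (intExp A2 h * B2))
    -- condition (1): drive layer
    (cond1 : ∀ (θ : ℂ) (η : Fin N × Fin n → ℂ), η ≠ 0 →
      η ᵥ* cmap Φ11 = θ • η → η ᵥ* cmap Ψ11 ≠ 0)
    -- condition (2): response layer together with inter-layer couplings
    (cond2 : ∀ (θ : ℂ) (η ξ : Fin N × Fin n → ℂ), η ≠ 0 →
      η ᵥ* cmap Φ22 = θ • η →
      ξ ᵥ* (θ • (1 : Matrix (Fin N × Fin n) (Fin N × Fin n) ℂ) - cmap Φ11)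
        = η ᵥ* cmap Φ21 →
      Sum.elim (ξ ᵥ* cmap Ψ11) (η ᵥ* cmap Ψ22) ≠ 0) :
    Controllable (Matrix.fromBlocks Φ11 0 Φ21 Φ22) (Matrix.fromBlocks Ψ11 0 0 Ψ22) :=
  twoLayer_driveResponse_controllable_general N n p Φ11 Φ22 Φ21 Ψ11 Ψ22 cond1 cond2
end

section
/- Let W^1, W^2, D ∈ ℂ^{N×N}, let λ ∈ ℂ be an eigenvalue of W^2 that is not an eigenvalue of W^1 (so W^1 − λ I_N is invertible), and let v(1), …, v(α) ∈ ℂ^{1×N} be a left Jordan chain of W^2 at λ (v(1)W^2 = λ v(1) and v(k)W^2 = λ v(k) + v(k−1) for k = 2, …, α). Define u(1) = −v(1) D (W^1 − λ I_N)^{−1} and u(k) = (u(k−1) − v(k) D)(W^1 − λ I_N)^{−1} for k = 2, …, α. Then the vectors [u(k), v(k)] ∈ ℂ^{1×2N} form a left Jordan chain of the block matrix W̄ = [[W^1, 0], [D, W^2]] at λ; that is, [u(1), v(1)] W̄ = λ [u(1), v(1)] and [u(k), v(k)] W̄ = λ [u(k), v(k)] + [u(k−1), v(k−1)] for k = 2,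 …, α. -/
open Matrix
open scoped Kronecker

/-!
Since `λ` is not an eigenvalue of `W^1`, the matrix `W^1 - λ I` is invertible, and the recursion
defining `u(k)` is equivalent to `u(k) W^1 + v(k) D = λ u(k) + u(k-1)` (with `u(0) = 0`). This is
the first block of the chain equation for `[u(k), v(k)] W̄`; the second block only involves `W^2`
and is the chain equation for `v`.
-/

theorem isUnit_det_sub_smul_one_of_not_isEig {k : Type*} [Fintype k] [DecidableEq k]
    {M : Matrix k k ℂ} {μ : ℂ} (h : ¬ IsEig M μ) : IsUnit (M - μ • (1 : Matrix k k ℂ)).det := by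
  rw [isUnit_iff_ne_zero]
  intro hdet
  obtain ⟨w, hw, hw0⟩ := exists_mulVec_eq_zero_iff.mpr hdet
  rw [sub_mulVec, smul_mulVec, one_mulVec, sub_eq_zero] at hw0
  exact h ⟨w, hw, hw0⟩

theorem vecMul_eq_smul_add_of_vecMul_sub_smul_one {R k : Type*} [CommRing R] [Fintype k]
    [DecidableEq k] {M : Matrix k k R} {μ : R} {w r : k → R}
    (h : w ᵥ* (M - μ • (1 : Matrix k k R)) = r) : w ᵥ* M = μ • w + r := by
  rw [← h, vecMul_sub, vecMul_smul, vecMul_one]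
  abel

theorem vecMul_fromBlocks_zero_eq_smul_add {R m n : Type*} [Semiring R] [Fintype m] [Fintype n]
    {A : Matrix m m R} {C : Matrix n m R} {B : Matrix n n R} {x x' : m → R} {y y' : n → R}
    (μ : R) (hx : x ᵥ* A + y ᵥ* C = μ • x + x') (hy : y ᵥ* B = μ • y + y') :
    Sum.elim x y ᵥ* fromBlocks A 0 C B = μ • Sum.elim x y + Sum.elim x' y' := by
  rw [vecMul_fromBlocks]
  simp only [Sum.elim_comp_inl, Sum.elim_comp_inr, vecMul_zero, zero_add, hx, hy]
  ext (i | i) <;> rfl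

theorem jordanChain_blockTriangular_general
    (N : ℕ) (W1 W2 D : Matrix (Fin N) (Fin N) ℂ) (μ : ℂ)
    (hμ1 : ¬ IsEig W1 μ)
    (α : ℕ) (v : ℕ → Fin N → ℂ)
    (hv1 : v 1 ᵥ* W2 = μ • v 1)
    (hvk : ∀ k, 2 ≤ k → k ≤ α → v k ᵥ* W2 = μ • v k + v (k - 1))
    (u : ℕ → Fin N → ℂ)
    (hu1 : u 1 = -((v 1 ᵥ* D) ᵥ* (W1 - μ • (1 : Matrix (Fin N) (Fin N) ℂ))⁻¹))
    (huk : ∀ k, 2 ≤ k → k ≤ α →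
      u k = (u (k - 1) - v k ᵥ* D) ᵥ* (W1 - μ • (1 : Matrix (Fin N) (Fin N) ℂ))⁻¹) :
    (Sum.elim (u 1) (v 1)) ᵥ* Matrix.fromBlocks W1 0 D W2 = μ • Sum.elim (u 1) (v 1) ∧
    ∀ k, 2 ≤ k → k ≤ α →
      (Sum.elim (u k) (v k)) ᵥ* Matrix.fromBlocks W1 0 D W2
        = μ • Sum.elim (u k) (v k) + Sum.elim (u (k - 1)) (v (k - 1)) := by
  have hA := isUnit_det_sub_smul_one_of_not_isEig hμ1
  have resolvent (r : Fin N → ℂ) :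
      (r ᵥ* (W1 - μ • 1)⁻¹) ᵥ* W1 = μ • (r ᵥ* (W1 - μ • 1)⁻¹) + r :=
    vecMul_eq_smul_add_of_vecMul_sub_smul_one <| by
      rw [vecMul_vecMul, nonsing_inv_mul _ hA, vecMul_one]
  constructor
  · have hx : u 1 ᵥ* W1 + v 1 ᵥ* D = μ • u 1 + 0 := by
      rw [hu1, ← neg_vecMul, resolvent]
      abel
    have hchain := vecMul_fromBlocks_zero_eq_smul_add μ hx (by rw [hv1, add_zero])
    rwa [Sum.elim_zero_zero, add_zero] at hchain
  · intro k hk2 hkα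
    refine vecMul_fromBlocks_zero_eq_smul_add μ ?_ (hvk k hk2 hkα)
    rw [huk k hk2 hkα, resolvent]
    abel

/-- a left Jordan chain of `W^2` at `λ` (with `λ` not an eigenvalue of `W^1`)
extends to a left Jordan chain of the block lower-triangular matrix
`W̄ = [[W^1, 0], [D, W^2]]` at `λ`. -/
theorem jordanChain_blockTriangular
    (N : ℕ) (W1 W2 D : Matrix (Fin N) (Fin N) ℂ) (μ : ℂ)
    (hμ2 : IsEig W2 μ) (hμ1 : ¬ IsEig W1 μ)
    (α : ℕ) (v : ℕ → Fin N → ℂ)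
    (hv1 : v 1 ᵥ* W2 = μ • v 1)
    (hvk : ∀ k, 2 ≤ k → k ≤ α → v k ᵥ* W2 = μ • v k + v (k - 1))
    (u : ℕ → Fin N → ℂ)
    (hu1 : u 1 = -((v 1 ᵥ* D) ᵥ* (W1 - μ • (1 : Matrix (Fin N) (Fin N) ℂ))⁻¹))
    (huk : ∀ k, 2 ≤ k → k ≤ α →
      u k = (u (k - 1) - v k ᵥ* D) ᵥ* (W1 - μ • (1 : Matrix (Fin N) (Fin N) ℂ))⁻¹) :
    (Sum.elim (u 1) (v 1)) ᵥ* Matrix.fromBlocks W1 0 D W2 = μ • Sum.elim (u 1) (v 1) ∧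
    ∀ k, 2 ≤ k → k ≤ α →
      (Sum.elim (u k) (v k)) ᵥ* Matrix.fromBlocks W1 0 D W2
        = μ • Sum.elim (u k) (v k) + Sum.elim (u (k - 1)) (v (k - 1)) :=
  jordanChain_blockTriangular_general N W1 W2 D μ hμ1 α v hv1 hvk u hu1 huk
end

section
/- Consider the M-layer networked sampled-data system with chain inter-layer structure: the state matrix Φ_s ∈ ℝ^{MNn×MNn} is block lower-bidiagonal with diagonal blocks Φ^{K,K} = I_N ⊗ e^{A^K h} + W^K ⊗ 𝓗^K(h) and subdiagonal blocks Φ^{K,K−1} = D^{K,K−1} ⊗ 𝓟^{K,K−1}(h), and the input matrix is Ψ_s = diag(Ψ^{1,1}, …, Ψ^{M,M}) with Ψ^{K,K} = Δ^K ⊗ 𝓑^K(h). Suppose that for every θ ∈ ℂ, every K ∈ {1, …, M}, and every tuple ξ_1, …, ξ_K ∈ ℂ^{1×Nn} with ξ_K ≠ 0, ξ_K(θ I_{Nn} − Φ^{K,K}) = 0, and ξ_j(θ I_{Nn} − Φ^{j,j}) = ξ_{j+1} Φ^{j+1,j} for j = 1, …, K−1, the concatenated row vector [ξ_1 Ψ^{1,1},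 …, ξ_K Ψ^{K,K}] is nonzero. Then the discrete-time system x(k+1) = Φ_s x(k) + Ψ_s u(k) is controllable. -/
open Matrix
open scoped Kronecker

/-!
A Hautus-type test. The states reachable from `0` in `T` steps form an increasing chain of
subspaces, which stabilises at an `F`-invariant subspace containing the range of `G`. If it were
proper, its complexified annihilator would be a nonzero subspace invariant under `η ↦ η F`, hence
would contain a left eigenvector `η` of `F` with `η G = 0`. For the block lower-bidiagonal `Φs`
and block-diagonal `Ψs`, cutting such an `η` into its layers `ξ_j` gives exactly the chain
equations of the hypothesis, with `K` the last nonzero layer, and `ξ_j Ψ^{j,j} = 0` for all `j`.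
-/

lemma Fin.sum_univ_ite_val_eq {R : Type*} [AddCommMonoid R] {M : ℕ} (f : ℕ → R)
    (hf : ∀ c, M ≤ c → f c = 0) (c : ℕ) :
    ∑ a : Fin M, (if (a : ℕ) = c then f a else 0) = f c := by
  rw [Fin.sum_univ_eq_sum_range (fun a => if a = c then f a else 0), Finset.sum_ite_eq']
  split_ifs with hc
  · rfl
  · exact (hf c (not_lt.mp (Finset.mem_range.not.mp hc))).symm

lemma Nat.exists_ne_zero_succ_eq_zero {V : Type*} [Zero V] {ξ : ℕ → V} {M a : ℕ}
    (ha : ξ a ≠ 0) (hM : ∀ c, M ≤ c → ξ c = 0) : ∃ K < M, ξ K ≠ 0 ∧ ξ (K + 1) = 0 := by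
  classical
  have haM : a ≤ M := by
    by_contra h
    exact ha (hM a (by omega))
  have hK : ξ (Nat.findGreatest (ξ · ≠ 0) M) ≠ 0 := Nat.findGreatest_spec (P := (ξ · ≠ 0)) haM ha
  refine ⟨_, (Nat.findGreatest_le M).lt_of_ne fun h => hK (by rw [h]; exact hM M le_rfl), hK, ?_⟩
  by_cases hle : Nat.findGreatest (ξ · ≠ 0) M + 1 ≤ M
  · exact not_not.mp (Nat.findGreatest_is_greatest (Nat.lt_succ_self _) hle)
  · exact hM _ (by omega)

theorem Module.End.exists_eigenvector_mem_of_mapsTo {K V : Type*} [Field K] [IsAlgClosed K]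
    [AddCommGroup V] [Module K V] [FiniteDimensional K V] (f : Module.End K V)
    {p : Submodule K V} (hp : p ≠ ⊥) (hf : ∀ x ∈ p, f x ∈ p) :
    ∃ θ : K, ∃ v ∈ p, v ≠ 0 ∧ f v = θ • v := by
  have := Submodule.nontrivial_iff_ne_bot.mpr hp
  obtain ⟨θ, hθ⟩ := Module.End.exists_eigenvalue (f.restrict hf)
  obtain ⟨v, hv⟩ := hθ.exists_hasEigenvector
  exact ⟨θ, v, v.2, fun h0 => hv.2 (Subtype.ext h0), congrArg Subtype.val hv.apply_eq_smul⟩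

lemma cmap_add {a b : Type*} (X Y : Matrix a b ℝ) : cmap (X + Y) = cmap X + cmap Y := by
  ext; simp [cmap]

section Reachability

variable {q r : Type*} [Fintype q] [Fintype r] (F : Matrix q q ℝ) (G : Matrix q r ℝ)

noncomputable def reachMap : ℕ → (ℕ → r → ℝ) →ₗ[ℝ] q → ℝ
  | 0 => 0
  | T + 1 => F.mulVecLin ∘ₗ reachMap T + G.mulVecLin ∘ₗ LinearMap.proj T

@[simp]
lemma reachMap_zero : reachMap F G 0 = 0 := rfl

lemma reachMap_succ_apply (T : ℕ) (u : ℕ → r → ℝ) :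
    reachMap F G (T + 1) u = F *ᵥ reachMap F G T u + G *ᵥ u T := rfl

lemma reachMap_congr {T : ℕ} {u v : ℕ → r → ℝ} (h : ∀ k < T, u k = v k) :
    reachMap F G T u = reachMap F G T v := by
  induction T with
  | zero => rfl
  | succ T ih =>
    rw [reachMap_succ_apply, reachMap_succ_apply, ih fun k hk => h k (by omega), h T (by omega)]

lemma range_reachMap_succ (T : ℕ) :
    LinearMap.range (reachMap F G (T + 1)) =
      (LinearMap.range (reachMap F G T)).map F.mulVecLin ⊔ LinearMap.range G.mulVecLin := by
  refine le_antisymm ?_ (sup_le ?_ ?_)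
  · rintro _ ⟨u, rfl⟩
    exact Submodule.add_mem_sup ⟨_, ⟨u, rfl⟩, rfl⟩ ⟨u T, rfl⟩
  · rintro _ ⟨_, ⟨u, rfl⟩, rfl⟩
    refine ⟨Function.update u T 0, ?_⟩
    rw [reachMap_succ_apply, Function.update_self, mulVec_zero, add_zero,
      reachMap_congr F G fun k hk => Function.update_of_ne hk.ne _ _]
    rfl
  · rintro _ ⟨w, rfl⟩
    refine ⟨Function.update 0 T w, ?_⟩
    rw [reachMap_succ_apply, Function.update_self,
      reachMap_congr F G (v := 0) fun k hk => Function.update_of_ne hk.ne _ _]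
    simp

lemma monotone_range_reachMap : Monotone fun T => LinearMap.range (reachMap F G T) := by
  refine monotone_nat_of_le_succ fun T => ?_
  induction T with
  | zero => simp
  | succ T ih =>
    rw [range_reachMap_succ, range_reachMap_succ]
    exact sup_le_sup_right (Submodule.map_mono ih) _

lemma exists_range_reachMap_invariant : ∃ T,
    (LinearMap.range (reachMap F G T)).map F.mulVecLin ≤ LinearMap.range (reachMap F G T) ∧
      LinearMap.range G.mulVecLin ≤ LinearMap.range (reachMap F G T) := by
  obtain ⟨T, hT⟩ := monotone_stabilizes_iff_noetherian.mpr inferInstance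
    ⟨_, monotone_range_reachMap F G⟩
  have hfix := range_reachMap_succ F G T
  have hstable : LinearMap.range (reachMap F G T) = LinearMap.range (reachMap F G (T + 1)) :=
    hT (T + 1) T.le_succ
  rw [← hstable] at hfix
  exact ⟨T, le_sup_left.trans hfix.ge, le_sup_right.trans hfix.ge⟩

lemma controllable_of_range_reachMap_eq_top [DecidableEq q] {T : ℕ}
    (hT : LinearMap.range (reachMap F G T) = ⊤) : Controllable F G := by
  intro x₀ xf
  obtain ⟨u, hu⟩ : xf - (F ^ T) *ᵥ x₀ ∈ LinearMap.range (reachMap F G T) := hT ▸ trivial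
  refine ⟨T, u, fun k => (F ^ k) *ᵥ x₀ + reachMap F G k u, by simp, fun k => ?_, by simp [hu]⟩
  dsimp only
  rw [reachMap_succ_apply, pow_succ', ← mulVec_mulVec, mulVec_add]
  abel

end Reachability

section Hautus

variable {q r : Type*} [Fintype q] [Fintype r]

lemma exists_ne_zero_forall_dotProduct_eq_zero {K : Type*} [Field K] {R : Submodule K (q → K)}
    (hR : R ≠ ⊤) : ∃ y ≠ 0, ∀ x ∈ R, y ⬝ᵥ x = 0 := by
  classical
  obtain ⟨x, hx⟩ := SetLike.exists_not_mem_of_ne_top R hR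
  obtain ⟨f, hfx, hf⟩ := R.exists_dual_map_eq_bot_of_notMem hx inferInstance
  have hf_apply (z : q → K) : (dotProductEquiv K q).symm f ⬝ᵥ z = f z := by
    rw [← dotProductEquiv_apply_apply, LinearEquiv.apply_symm_apply]
  refine ⟨(dotProductEquiv K q).symm f, fun h0 => hfx ?_, fun z hz => ?_⟩
  · rw [← hf_apply, h0, zero_dotProduct]
  · rw [hf_apply, ← Submodule.mem_bot K, ← hf]
    exact Submodule.mem_map_of_mem hz

lemma dotProduct_ofReal_mulVec (η : q → ℂ) (A : Matrix q r ℝ) (x : r → ℝ) :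
    η ⬝ᵥ (Complex.ofReal ∘ (A *ᵥ x)) = (η ᵥ* cmap A) ⬝ᵥ (Complex.ofReal ∘ x) := by
  rw [← dotProduct_mulVec]
  congr 1
  funext i
  exact RingHom.map_mulVec Complex.ofRealHom A x i

def complexAnnihilator (R : Submodule ℝ (q → ℝ)) : Submodule ℂ (q → ℂ) where
  carrier := {η | ∀ x ∈ R, η ⬝ᵥ (Complex.ofReal ∘ x) = 0}
  add_mem' ha hb x hx := by rw [add_dotProduct, ha x hx, hb x hx, add_zero]
  zero_mem' _ _ := zero_dotProduct _
  smul_mem' c η hη x hx := by rw [smul_dotProduct, hη x hx, smul_zero]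

variable {R : Submodule ℝ (q → ℝ)} {η : q → ℂ}

lemma complexAnnihilator_ne_bot (hR : R ≠ ⊤) : complexAnnihilator R ≠ ⊥ := by
  obtain ⟨y, hy, hyR⟩ := exists_ne_zero_forall_dotProduct_eq_zero hR
  refine (Submodule.ne_bot_iff _).mpr ⟨Complex.ofReal ∘ y, fun x hx => ?_, fun h0 => hy ?_⟩
  · change Complex.ofRealHom ∘ y ⬝ᵥ Complex.ofRealHom ∘ x = 0
    rw [← RingHom.map_dotProduct, hyR x hx, map_zero]
  · funext i
    simpa using congrFun h0 i

lemma vecMul_mem_complexAnnihilator {F : Matrix q q ℝ} (hF : R.map F.mulVecLin ≤ R)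
    (hη : η ∈ complexAnnihilator R) : η ᵥ* cmap F ∈ complexAnnihilator R := fun x hx => by
  rw [← dotProduct_ofReal_mulVec]
  exact hη _ (hF ⟨x, hx, rfl⟩)

lemma vecMul_cmap_eq_zero_of_mem_complexAnnihilator {G : Matrix q r ℝ}
    (hG : LinearMap.range G.mulVecLin ≤ R) (hη : η ∈ complexAnnihilator R) :
    η ᵥ* cmap G = 0 := by
  classical
  ext j
  have hj := hη _ (hG ⟨Pi.single j 1, rfl⟩)
  rw [mulVecLin_apply, dotProduct_ofReal_mulVec] at hj
  simpa [dotProduct, Pi.single_apply, apply_ite] using hj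

theorem controllable_of_hautus [DecidableEq q] (F : Matrix q q ℝ) (G : Matrix q r ℝ)
    (h : ∀ (θ : ℂ) (η : q → ℂ), η ≠ 0 → η ᵥ* cmap F = θ • η → η ᵥ* cmap G ≠ 0) :
    Controllable F G := by
  obtain ⟨T, hF, hG⟩ := exists_range_reachMap_invariant F G
  refine controllable_of_range_reachMap_eq_top F G (T := T) (by_contra fun hR => ?_)
  obtain ⟨θ, η, hη, hη0, heig⟩ := Module.End.exists_eigenvector_mem_of_mapsTo
    (cmap F).vecMulLinear (complexAnnihilator_ne_bot hR) fun _ => vecMul_mem_complexAnnihilator hF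
  exact h θ η hη0 heig (vecMul_cmap_eq_zero_of_mem_complexAnnihilator hG hη)

end Hautus

section Layers

variable {M : ℕ} {ι κ : Type*}

def layer (η : Fin M × ι → ℂ) (K : ℕ) : ι → ℂ :=
  if h : K < M then fun v => η (⟨K, h⟩, v) else 0

lemma layer_val (η : Fin M × ι → ℂ) (a : Fin M) : layer η a = fun v => η (a, v) := by
  simp [layer]

lemma layer_of_le (η : Fin M × ι → ℂ) {K : ℕ} (hK : M ≤ K) : layer η K = 0 := by
  simp [layer, not_lt.mpr hK]

lemma exists_top_layer {η : Fin M × ι → ℂ} (hη : η ≠ 0) :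
    ∃ K < M, layer η K ≠ 0 ∧ layer η (K + 1) = 0 := by
  obtain ⟨⟨a, v⟩, hav⟩ := Function.ne_iff.mp hη
  refine Nat.exists_ne_zero_succ_eq_zero (a := a) (fun h => hav ?_) fun c => layer_of_le η
  simpa [layer_val] using congrFun h v

def shiftedBlockDiagonal (X : ℕ → Matrix ι κ ℝ) (s : ℕ) : Matrix (Fin M × ι) (Fin M × κ) ℝ :=
  of fun a b => if (a.1 : ℕ) = b.1 + s then X b.1 a.2 b.2 else 0

lemma vecMul_cmap_shiftedBlockDiagonal_apply [Fintype ι] (η : Fin M × ι → ℂ)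
    (X : ℕ → Matrix ι κ ℝ) (s : ℕ) (b : Fin M) (v : κ) :
    (η ᵥ* cmap (shiftedBlockDiagonal X s)) (b, v) = (layer η (b + s) ᵥ* cmap (X b)) v := by
  rw [vecMul, dotProduct, Fintype.sum_prod_type, vecMul, dotProduct,
    ← Fin.sum_univ_ite_val_eq (fun c => ∑ w, layer η c w * cmap (X b) w v)
      (fun c hc => by simp [layer_of_le η hc])]
  refine Finset.sum_congr rfl fun a _ => ?_
  split_ifs with h
  · simp [cmap, shiftedBlockDiagonal, ← h, layer_val]
  · simp [cmap, shiftedBlockDiagonal, h]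

lemma layer_vecMul_eq_of_vecMul_eq_smul [Fintype ι] [DecidableEq ι] {η : Fin M × ι → ℂ} {θ : ℂ}
    {Φd Φsub : ℕ → Matrix ι ι ℝ}
    (heig : η ᵥ* cmap (shiftedBlockDiagonal Φd 0 + shiftedBlockDiagonal Φsub 1) = θ • η)
    {j : ℕ} (hj : j < M) :
    layer η j ᵥ* (θ • (1 : Matrix ι ι ℂ) - cmap (Φd j)) = layer η (j + 1) ᵥ* cmap (Φsub j) := by
  ext v
  have hjv := congrFun heig (⟨j, hj⟩, v)
  rw [cmap_add, vecMul_add, Pi.add_apply, vecMul_cmap_shiftedBlockDiagonal_apply,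
    vecMul_cmap_shiftedBlockDiagonal_apply] at hjv
  simp only [vecMul_sub, vecMul_smul, vecMul_one, Pi.sub_apply, Pi.smul_apply, smul_eq_mul]
  simp only [add_zero, Pi.smul_apply, smul_eq_mul] at hjv
  have hlayer : layer η j v = η (⟨j, hj⟩, v) := congrFun (layer_val η ⟨j, hj⟩) v
  rw [← hlayer] at hjv
  linear_combination hjv.symm

lemma layer_vecMul_eq_zero_of_vecMul_eq_zero [Fintype ι] {η : Fin M × ι → ℂ}
    {Ψd : ℕ → Matrix ι κ ℝ} (hΨ : η ᵥ* cmap (shiftedBlockDiagonal Ψd 0) = 0) {j : ℕ}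
    (hj : j < M) : layer η j ᵥ* cmap (Ψd j) = 0 := by
  ext v
  simpa [vecMul_cmap_shiftedBlockDiagonal_apply] using congrFun hΨ (⟨j, hj⟩, v)

lemma of_bidiagonal_eq_add (Φd Φsub : ℕ → Matrix ι ι ℝ) :
    (of fun a b : Fin M × ι => if (a.1 : ℕ) = b.1 then Φd a.1 a.2 b.2
      else if (a.1 : ℕ) = b.1 + 1 then Φsub b.1 a.2 b.2 else 0) =
      shiftedBlockDiagonal Φd 0 + shiftedBlockDiagonal Φsub 1 := by
  ext a b
  simp only [shiftedBlockDiagonal, of_apply, Matrix.add_apply, add_zero]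
  split_ifs with h₀ <;> first | omega | simp [h₀]

lemma of_blockDiagonal_eq (Ψd : ℕ → Matrix ι κ ℝ) :
    (of fun (a : Fin M × ι) (b : Fin M × κ) =>
      if (a.1 : ℕ) = (b.1 : ℕ) then Ψd a.1 a.2 b.2 else 0) = shiftedBlockDiagonal Ψd 0 := by
  ext a b
  simp only [shiftedBlockDiagonal, of_apply, add_zero]
  split_ifs with h <;> simp [h]

end Layers

/-- Layers are 0-indexed: layer `j` here is layer `j + 1` of the paper, and `Φsub j` is the
coupling block from layer `j` into layer `j + 1`. -/
theorem chainStructure_controllable_general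
    (M N n p : ℕ)
    (Φd Φsub : ℕ → Matrix (Fin N × Fin n) (Fin N × Fin n) ℝ)
    (Ψd : ℕ → Matrix (Fin N × Fin n) (Fin N × Fin p) ℝ)
    (Φs : Matrix (Fin M × (Fin N × Fin n)) (Fin M × (Fin N × Fin n)) ℝ)
    (Ψs : Matrix (Fin M × (Fin N × Fin n)) (Fin M × (Fin N × Fin p)) ℝ)
    (hΦs : Φs = Matrix.of fun q r =>
      if (q.1 : ℕ) = (r.1 : ℕ) then Φd (q.1 : ℕ) q.2 r.2
      else if (q.1 : ℕ) = (r.1 : ℕ) + 1 then Φsub (r.1 : ℕ) q.2 r.2 else 0)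
    (hΨs : Ψs = Matrix.of fun q r =>
      if (q.1 : ℕ) = (r.1 : ℕ) then Ψd (q.1 : ℕ) q.2 r.2 else 0)
    -- for every inter-layer coupling chain with nonzero top component,
    -- the concatenation [ξ_1 Ψ^{1,1}, …, ξ_K Ψ^{K,K}] is nonzero
    (hyp : ∀ (θ : ℂ) (K : ℕ), K < M → ∀ ξ : ℕ → Fin N × Fin n → ℂ,
      ξ K ≠ 0 →
      ξ K ᵥ* (θ • (1 : Matrix (Fin N × Fin n) (Fin N × Fin n) ℂ)
          - cmap (Φd K)) = 0 →
      (∀ j, j < K →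
        ξ j ᵥ* (θ • (1 : Matrix (Fin N × Fin n) (Fin N × Fin n) ℂ) - cmap (Φd j))
          = ξ (j + 1) ᵥ* cmap (Φsub j)) →
      ∃ j ≤ K, ξ j ᵥ* cmap (Ψd j) ≠ 0) :
    Controllable Φs Ψs := by
  rw [hΦs, hΨs, of_bidiagonal_eq_add, of_blockDiagonal_eq]
  refine controllable_of_hautus _ _ fun θ η hη heig hΨ => ?_
  obtain ⟨K, hKM, hK, hK1⟩ := exists_top_layer hη
  have hchain {j : ℕ} (hj : j < M) := layer_vecMul_eq_of_vecMul_eq_smul heig hj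
  obtain ⟨j, hjK, hj⟩ := hyp θ K hKM (layer η) hK
    (by rw [hchain hKM, hK1, zero_vecMul]) fun j hj => hchain (hj.trans hKM)
  exact hj (layer_vecMul_eq_zero_of_vecMul_eq_zero hΨ (hjK.trans_lt hKM))

/-- sufficient controllability condition for the deep networked
sampled-data system with chain inter-layer structure (Theorem 5 in the paper).
Layers are 0-indexed: layer `j` here is layer `j+1` of the paper; `D j` and `P j`
describe the inter-layer block from layer `j` into layer `j+1`. -/
theorem chainStructure_controllable
    (M N n m p : ℕ) (hM : 2 ≤ M) (hN : 2 ≤ N)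
    (A : ℕ → Matrix (Fin n) (Fin n) ℝ) (B : ℕ → Matrix (Fin n) (Fin p) ℝ)
    (C : ℕ → Matrix (Fin m) (Fin n) ℝ) (H : ℕ → Matrix (Fin n) (Fin m) ℝ)
    (P : ℕ → Matrix (Fin n) (Fin m) ℝ)
    (W : ℕ → Matrix (Fin N) (Fin N) ℝ) (D : ℕ → Matrix (Fin N) (Fin N) ℝ)
    (Δ : ℕ → Matrix (Fin N) (Fin N) ℝ)
    (hΔd : ∀ j, (Δ j).IsDiag) (hΔ01 : ∀ j i, Δ j i i = 0 ∨ Δ j i i = 1)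
    (h : ℝ) (hh : 0 < h)
    (Φd Φsub : ℕ → Matrix (Fin N × Fin n) (Fin N × Fin n) ℝ)
    (Ψd : ℕ → Matrix (Fin N × Fin n) (Fin N × Fin p) ℝ)
    (hΦd : ∀ j, Φd j = (1 : Matrix (Fin N) (Fin N) ℝ) ⊗ₖ matExp (h • A j)
        + W j ⊗ₖ (intExp (A j) h * H j * C j))
    (hΦsub : ∀ j, Φsub j = D j ⊗ₖ (intExp (A (j + 1)) h * P j * C j))
    (hΨd : ∀ j, Ψd j = Δ j ⊗ₖ (intExp (A j) h * B j))
    (Φs : Matrix (Fin M × (Fin N × Fin n)) (Fin M × (Fin N × Fin n)) ℝ)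
    (Ψs : Matrix (Fin M × (Fin N × Fin n)) (Fin M × (Fin N × Fin p)) ℝ)
    (hΦs : Φs = Matrix.of fun q r =>
      if (q.1 : ℕ) = (r.1 : ℕ) then Φd (q.1 : ℕ) q.2 r.2
      else if (q.1 : ℕ) = (r.1 : ℕ) + 1 then Φsub (r.1 : ℕ) q.2 r.2 else 0)
    (hΨs : Ψs = Matrix.of fun q r =>
      if (q.1 : ℕ) = (r.1 : ℕ) then Ψd (q.1 : ℕ) q.2 r.2 else 0)
    -- for every inter-layer coupling chain with nonzero top component,
    -- the concatenation [ξ_1 Ψ^{1,1}, …, ξ_K Ψ^{K,K}] is nonzero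
    (hyp : ∀ (θ : ℂ) (K : ℕ), K < M → ∀ ξ : ℕ → Fin N × Fin n → ℂ,
      ξ K ≠ 0 →
      ξ K ᵥ* (θ • (1 : Matrix (Fin N × Fin n) (Fin N × Fin n) ℂ)
          - cmap (Φd K)) = 0 →
      (∀ j, j < K →
        ξ j ᵥ* (θ • (1 : Matrix (Fin N × Fin n) (Fin N × Fin n) ℂ) - cmap (Φd j))
          = ξ (j + 1) ᵥ* cmap (Φsub j)) →
      ∃ j ≤ K, ξ j ᵥ* cmap (Ψd j) ≠ 0) :
    Controllable Φs Ψs :=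
  chainStructure_controllable_general M N n p Φd Φsub Ψd Φs Ψs hΦs hΨs hyp
end
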